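/- arXiv:2212.07149 — 5 statements merged into one kernel-verified Lean document; each statement's English description precedes it below -/
import Mathlib

section
/- Let f : ℝ^n → ℝ be differentiable, μ-strongly convex, and L-smooth with 0 ≤ μ < L. Then for all x, y: f(x) ≥ f(y) + ⟨∇f(y), x − y⟩ + (1/(2L))‖∇f(x) − ∇f(y)‖² + (μL/(2(L−μ)))‖x − y − (1/L)(∇f(x) − ∇f(y))‖². -/
/-!
Put `g = f - (μ/2)‖·‖²`, with gradient `g' = f' - μ • id`. Its Bregman divergence
`D_g(x, y) = g x - g y - ⟪g' y, x - y⟫` equals `D_f(x, y) - (μ/2)‖x - y‖²`, so strong convexity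
gives `D_g ≥ 0`, while `⟪f' x - f' y, x - y⟫ ≤ L‖x - y‖²` and the descent lemma give
`D_g ≤ ((L - μ)/2)‖x - y‖²`. For any function squeezed between `0` and `(c/2)‖x - y‖²`, the
three-point identity for `D_g` at the gradient step `w = x - (g' x - g' y)/c` yields
`D_g(x, y) ≥ ‖g' x - g' y‖² / (2c)`. With `c = L - μ`, rewriting `g'` in terms of `f'` is the
claimed inequality.
-/

open scoped RealInnerProductSpace
open Set

section

variable {E : Type*} [NormedAddCommGroup E] [InnerProductSpace ℝ E]

def bregmanDiv (g : E → ℝ) (g' : E → E) (x y : E) : ℝ := g x - g y - ⟪g' y, x - y⟫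

theorem bregmanDiv_eq_sub_sub_inner (g : E → ℝ) (g' : E → E) (x y w : E) :
    bregmanDiv g g' x y = bregmanDiv g g' w y - bregmanDiv g g' w x - ⟪g' x - g' y, w - x⟫ := by
  simp only [bregmanDiv, inner_sub_left, inner_sub_right]
  ring

theorem bregmanDiv_sub_half_mul_norm_sq (g : E → ℝ) (g' : E → E) (μ : ℝ) (x y : E) :
    bregmanDiv (fun z => g z - μ / 2 * ‖z‖ ^ 2) (fun z => g' z - μ • z) x y
      = bregmanDiv g g' x y - μ / 2 * ‖x - y‖ ^ 2 := by
  simp only [bregmanDiv, inner_sub_left, real_inner_smul_left, norm_sub_sq_real, inner_sub_right,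
    real_inner_self_eq_norm_sq, real_inner_comm x y]
  ring

theorem norm_sq_div_le_bregmanDiv {g : E → ℝ} {g' : E → E} {c : ℝ} (hc : 0 < c)
    (hnonneg : ∀ x y, 0 ≤ bregmanDiv g g' x y)
    (hle : ∀ x y, bregmanDiv g g' x y ≤ c / 2 * ‖x - y‖ ^ 2) (x y : E) :
    ‖g' x - g' y‖ ^ 2 / (2 * c) ≤ bregmanDiv g g' x y := by
  set u := g' x - g' y
  set w := x - c⁻¹ • u
  have hw : w - x = -(c⁻¹ • u) := sub_sub_cancel_left x _
  have hnorm : ‖w - x‖ = c⁻¹ * ‖u‖ := by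
    rw [hw, norm_neg, norm_smul, Real.norm_of_nonneg (inv_nonneg.2 hc.le)]
  have hinner : ⟪u, w - x⟫ = -(c⁻¹ * ‖u‖ ^ 2) := by
    rw [hw, inner_neg_right, real_inner_smul_right, real_inner_self_eq_norm_sq]
  have h1 := hnonneg w y
  have h2 := hle w x
  rw [hnorm] at h2
  rw [bregmanDiv_eq_sub_sub_inner g g' x y w, hinner]
  have : ‖u‖ ^ 2 / (2 * c) = c⁻¹ * ‖u‖ ^ 2 - c / 2 * (c⁻¹ * ‖u‖) ^ 2 := by
    field_simp; ring
  linarith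

section Calculus

variable [CompleteSpace E] {g : E → ℝ} {g' : E → E}

theorem HasGradientAt.sub {h : E → ℝ} {a b x : E} (hg : HasGradientAt g a x)
    (hh : HasGradientAt h b x) : HasGradientAt (fun z => g z - h z) (a - b) x := by
  rw [hasGradientAt_iff_hasFDerivAt, map_sub]
  exact hg.hasFDerivAt.sub hh.hasFDerivAt

theorem hasGradientAt_half_mul_norm_sq (c : ℝ) (x : E) :
    HasGradientAt (fun z : E => c / 2 * ‖z‖ ^ 2) (c • x) x := by
  rw [hasGradientAt_iff_hasFDerivAt]
  refine ((hasFDerivAt_id x).norm_sq.const_mul (c / 2)).congr_fderiv ?_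
  ext v
  simp only [id_eq, ContinuousLinearMap.comp_id, smul_apply, coe_innerSL_apply,
    nsmul_eq_mul, Nat.cast_ofNat, smul_eq_mul, map_smul, InnerProductSpace.toDual_apply_apply]
  ring

theorem HasGradientAt.hasDerivAt_add_smul {a x v : E} {t : ℝ}
    (hg : HasGradientAt g a (x + t • v)) :
    HasDerivAt (fun s : ℝ => g (x + s • v)) ⟪a, v⟫ t := by
  have hline : HasDerivAt (fun s : ℝ => x + s • v) v t := by
    simpa using ((hasDerivAt_id t).smul_const v).const_add x
  simpa [Function.comp_def, InnerProductSpace.toDual_apply_apply] using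
    hg.hasFDerivAt.comp_hasDerivAt t hline

theorem ConvexOn.bregmanDiv_nonneg (hconv : ConvexOn ℝ univ g) {y : E}
    (hg : HasGradientAt g (g' y) y) (x : E) : 0 ≤ bregmanDiv g g' x y := by
  have hline : ConvexOn ℝ univ (fun s : ℝ => g (y + s • (x - y))) := by
    refine (hconv.comp_affineMap (AffineMap.lineMap y x)).congr fun s _ => ?_
    simp [AffineMap.lineMap_apply, add_comm]
  have hd : HasDerivAt (fun s : ℝ => g (y + s • (x - y))) ⟪g' y, x - y⟫ 0 :=
    HasGradientAt.hasDerivAt_add_smul (by simpa using hg)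
  have := hline.le_slope_of_hasDerivAt (mem_univ 0) (mem_univ 1) zero_lt_one hd
  simp only [slope_def_field, one_smul, add_sub_cancel, zero_smul, add_zero, sub_zero, div_one]
    at this
  simp only [bregmanDiv]
  linarith

theorem bregmanDiv_le_of_inner_sub_le {c : ℝ} (hg : ∀ x, HasGradientAt g (g' x) x)
    (hc : ∀ x y, ⟪g' x - g' y, x - y⟫ ≤ c * ‖x - y‖ ^ 2) (x y : E) :
    bregmanDiv g g' x y ≤ c / 2 * ‖x - y‖ ^ 2 := by
  set v := x - y
  set φ : ℝ → ℝ := fun t => g (y + t • v) - t * ⟪g' y, v⟫ - c / 2 * t ^ 2 * ‖v‖ ^ 2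
  have hφ : ∀ t, HasDerivAt φ (⟪g' (y + t • v), v⟫ - ⟪g' y, v⟫ - c * t * ‖v‖ ^ 2) t := by
    intro t
    have h1 : HasDerivAt (fun s : ℝ => g (y + s • v)) ⟪g' (y + t • v), v⟫ t :=
      (hg _).hasDerivAt_add_smul
    have h2 := (hasDerivAt_id t).mul_const ⟪g' y, v⟫
    have h3 := ((hasDerivAt_pow 2 t).const_mul (c / 2)).mul_const (‖v‖ ^ 2)
    refine ((h1.sub h2).sub h3).congr_deriv ?_
    push_cast
    ring
  have hφ' : ∀ t ∈ interior (Ici (0 : ℝ)), deriv φ t ≤ 0 := by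
    intro t ht
    rw [interior_Ici, mem_Ioi] at ht
    have h := hc (y + t • v) y
    rw [add_sub_cancel_left, real_inner_smul_right, norm_smul, Real.norm_of_nonneg ht.le,
      inner_sub_left] at h
    rw [(hφ t).deriv]
    nlinarith
  have hdiff : Differentiable ℝ φ := fun t => (hφ t).differentiableAt
  have := antitoneOn_of_deriv_nonpos (convex_Ici 0) hdiff.continuous.continuousOn
    hdiff.differentiableOn hφ' self_mem_Ici (mem_Ici.2 zero_le_one) zero_le_one
  simp only [φ, v, one_smul, add_sub_cancel, zero_smul, add_zero] at this
  simp only [bregmanDiv]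
  linarith

end Calculus

theorem half_mul_norm_sq_add_norm_sub_smul_sq_div (u w : E) {μ L : ℝ} (hL : L ≠ 0)
    (hLμ : L - μ ≠ 0) :
    μ / 2 * ‖w‖ ^ 2 + ‖u - μ • w‖ ^ 2 / (2 * (L - μ))
      = 1 / (2 * L) * ‖u‖ ^ 2 + μ * L / (2 * (L - μ)) * ‖w - (1 / L) • u‖ ^ 2 := by
  simp only [norm_sub_sq_real, norm_smul, real_inner_smul_right,
    real_inner_comm u w, mul_pow, Real.norm_eq_abs, sq_abs]
  field_simp
  ring

end

/-- Interpolation inequality for `μ`-strongly convex, `L`-smooth functions (function-value form). -/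
theorem strongly_convex_smooth_interp_value
    {E : Type*} [NormedAddCommGroup E] [InnerProductSpace ℝ E] [FiniteDimensional ℝ E]
    (f : E → ℝ) (f' : E → E) (μ L : ℝ) (hμ : 0 ≤ μ) (hμL : μ < L)
    (hdiff : ∀ x, HasGradientAt f (f' x) x)
    (hsc : ConvexOn ℝ Set.univ (fun z => f z - μ / 2 * ‖z‖ ^ 2))
    (hlip : ∀ x y, ‖f' x - f' y‖ ≤ L * ‖x - y‖) :
    ∀ x y : E, f x ≥ f y + ⟪f' y, x - y⟫ + (1 / (2 * L)) * ‖f' x - f' y‖ ^ 2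
      + (μ * L / (2 * (L - μ))) * ‖x - y - (1 / L) • (f' x - f' y)‖ ^ 2 := by
  intro x y
  have hLμ : 0 < L - μ := sub_pos.2 hμL
  set g := fun z => f z - μ / 2 * ‖z‖ ^ 2
  set g' := fun z => f' z - μ • z
  have hg : ∀ p q, bregmanDiv g g' p q = bregmanDiv f f' p q - μ / 2 * ‖p - q‖ ^ 2 :=
    bregmanDiv_sub_half_mul_norm_sq f f' μ
  have hg_nonneg : ∀ p q, 0 ≤ bregmanDiv g g' p q := fun p q =>
    hsc.bregmanDiv_nonneg (g' := g') ((hdiff q).sub (hasGradientAt_half_mul_norm_sq μ q)) p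
  have hf_inner : ∀ p q, ⟪f' p - f' q, p - q⟫ ≤ L * ‖p - q‖ ^ 2 := fun p q => by
    nlinarith [real_inner_le_norm (f' p - f' q) (p - q), hlip p q, norm_nonneg (p - q)]
  have hg_le : ∀ p q, bregmanDiv g g' p q ≤ (L - μ) / 2 * ‖p - q‖ ^ 2 := fun p q => by
    rw [hg]
    linarith [bregmanDiv_le_of_inner_sub_le hdiff hf_inner p q]
  have key := norm_sq_div_le_bregmanDiv hLμ hg_nonneg hg_le x y
  rw [hg, show g' x - g' y = (f' x - f' y) - μ • (x - y) by simp only [g']; module] at key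
  have hid := half_mul_norm_sq_add_norm_sub_smul_sq_div (f' x - f' y) (x - y)
    (hμ.trans_lt hμL).ne' hLμ.ne'
  simp only [bregmanDiv] at key
  linarith
end

section
/- Let f be convex differentiable with L-Lipschitz gradient, g proper closed convex, φ = f + g, and t > 0. Define the proximal gradient mapping G(x,t) := (1/t)(x − prox_{tg}(x − t∇f(x))). Then for every x, ‖G(x,t)‖ ≤ d(0, ∂φ(x)), i.e., ‖G(x,t)‖ ≤ ‖s‖ for every s ∈ ∂φ(x) = ∇f(x) + ∂g(x). -/
open scoped RealInnerProductSpace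

/-- First-order optimality for the prox objective: `(y - p)/t` is a subgradient of `g` at `p`. -/
lemma prox_subgrad
    {E : Type*} [NormedAddCommGroup E] [InnerProductSpace ℝ E]
    (g : E → ℝ) (hg : ConvexOn ℝ Set.univ g)
    (t : ℝ) (ht : 0 < t) (y p : E)
    (hmin : IsMinOn (fun z => g z + (1 / (2 * t)) * ‖z - y‖ ^ 2) Set.univ p) :
    ∀ u, g p + (1 / t) * ⟪y - p, u - p⟫ ≤ g u := by
  intro u
  set B : ℝ := (1 / (2 * t)) * ‖u - p‖ ^ 2 with hB
  have hBnn : 0 ≤ B := by positivity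
  set A : ℝ := g u - g p - (1 / t) * ⟪y - p, u - p⟫ with hA
  -- key: for all θ ∈ (0,1], 0 ≤ A + θ * B
  have key : ∀ θ : ℝ, 0 < θ → θ ≤ 1 → 0 ≤ A + θ * B := by
    intro θ hθ hθ1
    have hmem : p + θ • (u - p) ∈ Set.univ := Set.mem_univ _
    have h1 := hmin hmem
    simp only [Set.mem_setOf_eq] at h1
    have hconvpt : g (p + θ • (u - p)) ≤ (1 - θ) * g p + θ * g u := by
      have := hg.2 (Set.mem_univ p) (Set.mem_univ u) (by linarith : (0:ℝ) ≤ 1 - θ)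
        (le_of_lt hθ) (by ring)
      have heq : (1 - θ) • p + θ • u = p + θ • (u - p) := by
        simp [smul_sub, sub_smul]; abel
      rw [heq] at this
      simpa using this
    have hnorm : ‖(p + θ • (u - p)) - y‖ ^ 2
        = ‖p - y‖ ^ 2 + 2 * θ * ⟪p - y, u - p⟫ + θ ^ 2 * ‖u - p‖ ^ 2 := by
      have heq : (p + θ • (u - p)) - y = (p - y) + θ • (u - p) := by abel
      rw [heq, norm_add_sq_real, real_inner_smul_right, norm_smul]
      simp [mul_pow, abs_of_pos hθ]
      ring
    have hip : ⟪p - y, u - p⟫ = -⟪y - p, u - p⟫ := by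
      rw [← inner_neg_left]; congr 1; abel
    have hexp : (1 / (2 * t)) * (‖p - y‖ ^ 2 + 2 * θ * (-⟪y - p, u - p⟫) + θ ^ 2 * ‖u - p‖ ^ 2)
        = (1 / (2 * t)) * ‖p - y‖ ^ 2 - (1 / t) * θ * ⟪y - p, u - p⟫ + θ ^ 2 * B := by
      rw [hB]; field_simp; ring
    have h2 : g p + (1 / (2 * t)) * ‖p - y‖ ^ 2 ≤ (1 - θ) * g p + θ * g u +
        ((1 / (2 * t)) * ‖p - y‖ ^ 2 - (1 / t) * θ * ⟪y - p, u - p⟫ + θ ^ 2 * B) := by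
      calc g p + (1 / (2 * t)) * ‖p - y‖ ^ 2
          ≤ g (p + θ • (u - p)) + (1 / (2 * t)) * ‖(p + θ • (u - p)) - y‖ ^ 2 := h1
        _ ≤ _ := by rw [hnorm, hip, hexp]; linarith
    have h4 : 0 ≤ θ * (A + θ * B) := by
      have hring : θ * (A + θ * B)
          = θ * (g u - g p) - (1 / t) * θ * ⟪y - p, u - p⟫ + θ ^ 2 * B := by
        rw [hA]; ring
      rw [hring]; linarith
    exact nonneg_of_mul_nonneg_right h4 hθ
  -- conclude 0 ≤ A
  have hA0 : 0 ≤ A := by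
    by_contra h
    push_neg at h
    have h2B : (0:ℝ) < 2 * (B + 1) := by linarith
    set θ : ℝ := min 1 (-A / (2 * (B + 1))) with hθdef
    have hθpos : 0 < θ := lt_min one_pos (div_pos (neg_pos.mpr h) h2B)
    have hθ1 : θ ≤ 1 := min_le_left _ _
    have hθ2 : θ ≤ -A / (2 * (B + 1)) := min_le_right _ _
    have hkey := key θ hθpos hθ1
    rw [le_div_iff₀ h2B] at hθ2
    nlinarith [mul_nonneg hθpos.le hBnn]
  rw [hA] at hA0
  linarith

/-- The norm of the proximal gradient mapping `G(x,t) = (1/t)(x - prox_{tg}(x - t∇f x))`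
is bounded by the norm of every subgradient `∇f x + s`, `s ∈ ∂g x`; hence by `d(0, ∂φ(x))`. -/
theorem pgm_norm_le_subgrad_norm
    {E : Type*} [NormedAddCommGroup E] [InnerProductSpace ℝ E] [FiniteDimensional ℝ E]
    (f : E → ℝ) (f' : E → E) (g : E → ℝ) (L : ℝ) (hL : 0 < L)
    (hdiff : ∀ x, HasGradientAt f (f' x) x)
    (hconv : ConvexOn ℝ Set.univ f)
    (hlip : ∀ x y, ‖f' x - f' y‖ ≤ L * ‖x - y‖)
    (hg : ConvexOn ℝ Set.univ g)
    (t : ℝ) (ht : 0 < t) (prox : E → E)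
    (hprox : ∀ y : E, IsMinOn (fun z => g z + (1 / (2 * t)) * ‖z - y‖ ^ 2) Set.univ (prox y)) :
    ∀ x : E, ∀ s ∈ {v : E | ∀ u, g x + ⟪v, u - x⟫ ≤ g u},
      ‖(1 / t) • (x - prox (x - t • f' x))‖ ≤ ‖f' x + s‖ := by
  intro x s hs
  set y : E := x - t • f' x with hy
  set p : E := prox y with hp
  have hsub := prox_subgrad g hg t ht y p (hprox y)
  -- monotonicity: subgradient inequalities at x and p
  have h1 : g x + ⟪s, p - x⟫ ≤ g p := hs p
  have h2 : g p + (1 / t) * ⟪y - p, x - p⟫ ≤ g x := hsub x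
  have hmono : ⟪s, p - x⟫ + (1 / t) * ⟪y - p, x - p⟫ ≤ 0 := by linarith
  have hyp : y - p = (x - p) - t • f' x := by rw [hy]; abel
  have hinner : ⟪y - p, x - p⟫ = ‖x - p‖ ^ 2 - t * ⟪f' x, x - p⟫ := by
    rw [hyp, inner_sub_left, real_inner_self_eq_norm_sq, real_inner_smul_left]
  have hsp : ⟪s, p - x⟫ = -⟪s, x - p⟫ := by
    rw [← inner_neg_right]; congr 1; abel
  rw [hsp, hinner] at hmono
  have hdistr : (1 / t) * (‖x - p‖ ^ 2 - t * ⟪f' x, x - p⟫)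
      = (1 / t) * ‖x - p‖ ^ 2 - ⟪f' x, x - p⟫ := by
    field_simp
  rw [hdistr] at hmono
  have hkey : (1 / t) * ‖x - p‖ ^ 2 ≤ ⟪f' x + s, x - p⟫ := by
    rw [inner_add_left]; linarith
  have hcs : ⟪f' x + s, x - p⟫ ≤ ‖f' x + s‖ * ‖x - p‖ := real_inner_le_norm _ _
  have hG : ‖(1 / t) • (x - p)‖ = (1 / t) * ‖x - p‖ := by
    rw [norm_smul, Real.norm_eq_abs, abs_of_pos (by positivity : (0:ℝ) < 1 / t)]
  rw [hG]
  rcases eq_or_ne (x - p) 0 with hxp | hxp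
  · rw [hxp, norm_zero, mul_zero]; exact norm_nonneg _
  · have hnorm : 0 < ‖x - p‖ := norm_pos_iff.mpr hxp
    have hle : (1 / t) * ‖x - p‖ ^ 2 ≤ ‖f' x + s‖ * ‖x - p‖ := le_trans hkey hcs
    have ht' : (0:ℝ) < 1 / t := by positivity
    nlinarith
end

section
/- (Norm monotonicity of the proximal gradient step) Let f be μ-strongly convex and L-smooth (0 ≤ μ ≤ L), g proper closed convex, φ = f + g, t > 0, ρ(t) := max{|1 − Lt|, |1 − μt|}. For x ∈ ℝ^n let x⁺ := prox_{tg}(x − t∇f(x)) and s⁺ ∈ ∂g(x⁺) the subgradient with x⁺ = x − t(∇f(x) + s⁺). Then ‖∇f(x⁺) + s⁺‖ ≤ ρ(t)·(1/t)‖x − x⁺‖. -/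
/-!
Put `d = x - x⁺` and `v = ∇f x - ∇f x⁺`; the step relation gives `t (∇f x⁺ + s⁺) = d - t v`.
The function `f - μ/2 ‖·‖²` is convex with `(L - μ)`-smooth gradient `∇f - μ id`, so that gradient
is `1/(L - μ)`-cocoercive, which is the interpolation inequality `⟪v - μ d, L d - v⟫ ≥ 0`. It places
`v` in the ball of radius `(L - μ)/2 ‖d‖` about `(μ + L)/2 d`, hence
`‖d - t v‖ ≤ (|1 - t (μ + L)/2| + t (L - μ)/2) ‖d‖ = ρ(t) ‖d‖`.
-/

open scoped RealInnerProductSpace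

open Set Filter Topology

lemma abs_add_abs_le_max_abs_sub_abs_add (a b : ℝ) : |a| + |b| ≤ max |a - b| |a + b| := by
  rcases abs_cases a with ⟨ha, -⟩ | ⟨ha, -⟩ <;> rcases abs_cases b with ⟨hb, -⟩ | ⟨hb, -⟩ <;>
    rw [ha, hb]
  exacts [le_max_of_le_right (le_abs_self _), le_max_of_le_left (le_abs_self _),
    le_max_of_le_left (by linarith [neg_le_abs (a - b)]),
    le_max_of_le_right (by linarith [neg_le_abs (a + b)])]

section InnerProductSpace

variable {E : Type*} [NormedAddCommGroup E] [InnerProductSpace ℝ E]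

lemma norm_sub_smul_le_max_mul_norm {μ L : ℝ} {v d : E} (h : 0 ≤ ⟪v - μ • d, L • d - v⟫)
    (t : ℝ) : ‖d - t • v‖ ≤ max |1 - L * t| |1 - μ * t| * ‖d‖ := by
  set c := (μ + L) / 2
  have hball : ‖v - c • d‖ ≤ |(L - μ) / 2| * ‖d‖ := by
    have hsq : ‖v - c • d‖ ^ 2 = ((L - μ) / 2 * ‖d‖) ^ 2 - ⟪v - μ • d, L • d - v⟫ := by
      simp only [norm_sub_sq_real, inner_sub_left, inner_sub_right, real_inner_smul_left,
        real_inner_smul_right, norm_smul, real_inner_self_eq_norm_sq, real_inner_comm d v,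
        Real.norm_eq_abs, mul_pow, sq_abs]
      ring
    refine le_of_pow_le_pow_left₀ two_ne_zero (by positivity) ?_
    rw [mul_pow, sq_abs, ← mul_pow]
    linarith
  calc ‖d - t • v‖ = ‖(1 - t * c) • d - t • (v - c • d)‖ := by congr 1; module
    _ ≤ |1 - t * c| * ‖d‖ + |t| * (|(L - μ) / 2| * ‖d‖) := by
        refine (norm_sub_le _ _).trans (add_le_add ?_ ?_)
        · rw [norm_smul, Real.norm_eq_abs]
        · rw [norm_smul, Real.norm_eq_abs]; gcongr
    _ = (|1 - t * c| + |t * ((L - μ) / 2)|) * ‖d‖ := by rw [abs_mul]; ring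
    _ ≤ max |1 - L * t| |1 - μ * t| * ‖d‖ := by
        gcongr
        refine (abs_add_abs_le_max_abs_sub_abs_add _ _).trans_eq ?_
        congr 2 <;> ring

variable [CompleteSpace E] {f : E → ℝ}

lemma HasGradientAt.hasDerivAt_comp_add_smul {g x d : E} {r : ℝ}
    (hf : HasGradientAt f g (x + r • d)) :
    HasDerivAt (fun r : ℝ => f (x + r • d)) ⟪g, d⟫ r := by
  have hline : HasDerivAt (fun r : ℝ => x + r • d) d r := by
    simpa using ((hasDerivAt_id r).smul_const d).const_add x
  exact (hasGradientAt_iff_hasFDerivAt.mp hf).comp_hasDerivAt r hline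

lemma ConvexOn.add_inner_gradient_le {g x : E} (hconv : ConvexOn ℝ univ f)
    (hf : HasGradientAt f g x) (y : E) : f x + ⟪g, y - x⟫ ≤ f y := by
  have hline : ConvexOn ℝ univ (fun r : ℝ => f (x + r • (y - x))) := by
    simpa [Function.comp_def, AffineMap.lineMap_apply, add_comm]
      using hconv.comp_affineMap (AffineMap.lineMap x y)
  have hderiv : HasDerivAt (fun r : ℝ => f (x + r • (y - x))) ⟪g, y - x⟫ 0 :=
    HasGradientAt.hasDerivAt_comp_add_smul (by simpa using hf)
  have hslope := hline.le_slope_of_hasDerivAt (mem_univ 0) (mem_univ 1) zero_lt_one hderiv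
  simp only [slope_def_field, one_smul, add_sub_cancel, zero_smul, add_zero, sub_zero,
    div_one] at hslope
  linarith

lemma le_add_inner_gradient_add_sq_of_lipschitz {f' : E → E} {L : ℝ}
    (hf : ∀ z, HasGradientAt f (f' z) z) {x : E} (hlip : ∀ z, ‖f' z - f' x‖ ≤ L * ‖z - x‖)
    (y : E) : f y ≤ f x + ⟪f' x, y - x⟫ + L / 2 * ‖y - x‖ ^ 2 := by
  set d := y - x
  have hderiv (r : ℝ) : HasDerivAt (fun r : ℝ => f (x + r • d)) ⟪f' (x + r • d), d⟫ r :=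
    (hf _).hasDerivAt_comp_add_smul
  have hbound (r : ℝ) (hr : 0 ≤ r) :
      ⟪f' (x + r • d), d⟫ ≤ ⟪f' x, d⟫ + L * ‖d‖ ^ 2 * r := by
    calc ⟪f' (x + r • d), d⟫ = ⟪f' x, d⟫ + ⟪f' (x + r • d) - f' x, d⟫ := by
          rw [inner_sub_left]; ring
      _ ≤ ⟪f' x, d⟫ + ‖f' (x + r • d) - f' x‖ * ‖d‖ := by
          gcongr; exact real_inner_le_norm _ _
      _ ≤ ⟪f' x, d⟫ + L * ‖r • d‖ * ‖d‖ := by grw [hlip (x + r • d), add_sub_cancel_left]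
      _ = ⟪f' x, d⟫ + L * ‖d‖ ^ 2 * r := by
          rw [norm_smul, Real.norm_eq_abs, abs_of_nonneg hr]; ring
  have hB (r : ℝ) : HasDerivAt (fun r : ℝ => f x + r * ⟪f' x, d⟫ + L / 2 * ‖d‖ ^ 2 * r ^ 2)
      (⟪f' x, d⟫ + L * ‖d‖ ^ 2 * r) r := by
    refine ((((hasDerivAt_id r).mul_const ⟪f' x, d⟫).const_add (f x)).add
      ((hasDerivAt_pow 2 r).const_mul (L / 2 * ‖d‖ ^ 2))).congr_deriv ?_
    simp only [one_mul, Nat.cast_ofNat]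
    ring
  have hcompare := image_le_of_deriv_right_le_deriv_boundary (a := 0) (b := 1)
    (fun r _ => (hderiv r).continuousAt.continuousWithinAt)
    (fun r _ => (hderiv r).hasDerivWithinAt) (by simp)
    (fun r _ => (hB r).continuousAt.continuousWithinAt) (fun r _ => (hB r).hasDerivWithinAt)
    (fun r hr => hbound r hr.1) (right_mem_Icc.mpr zero_le_one)
  simpa [d] using hcompare

variable {f' : E → E} {K : ℝ}

lemma ConvexOn.add_inner_gradient_add_sq_le (hconv : ConvexOn ℝ univ f)
    (hf : ∀ z, HasGradientAt f (f' z) z) (hK : 0 < K)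
    (hub : ∀ a b, f b ≤ f a + ⟪f' a, b - a⟫ + K / 2 * ‖b - a‖ ^ 2) (x y : E) :
    f x + ⟪f' x, y - x⟫ + 1 / (2 * K) * ‖f' y - f' x‖ ^ 2 ≤ f y := by
  set w := f' y - f' x
  -- the point reached from `y` by a gradient step of the model `f - ⟪f' x, ·⟫`
  set u := y - K⁻¹ • w
  have hlower := hconv.add_inner_gradient_le (hf x) u
  have hupper := hub y u
  have huy : u - y = -(K⁻¹ • w) := sub_sub_cancel_left _ _
  have hinner : ⟪f' x, u - x⟫ = ⟪f' x, y - x⟫ + ⟪f' y, u - y⟫ + K⁻¹ * ‖w‖ ^ 2 := by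
    rw [show u - x = (y - x) + (u - y) by abel, inner_add_right, huy,
      ← real_inner_self_eq_norm_sq]
    simp only [inner_neg_right, real_inner_smul_right, w, inner_sub_left]
    ring
  have hnorm : ‖u - y‖ = K⁻¹ * ‖w‖ := by
    rw [huy, norm_neg, norm_smul, Real.norm_of_nonneg (inv_nonneg.mpr hK.le)]
  rw [hnorm] at hupper
  have hquad : K / 2 * (K⁻¹ * ‖w‖) ^ 2 = 1 / (2 * K) * ‖w‖ ^ 2 := by field_simp
  have hlin : K⁻¹ * ‖w‖ ^ 2 = 2 * (1 / (2 * K) * ‖w‖ ^ 2) := by field_simp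
  linarith

lemma ConvexOn.sq_norm_gradient_sub_le_mul_inner (hconv : ConvexOn ℝ univ f)
    (hf : ∀ z, HasGradientAt f (f' z) z) (hK : 0 ≤ K)
    (hub : ∀ a b, f b ≤ f a + ⟪f' a, b - a⟫ + K / 2 * ‖b - a‖ ^ 2) (x y : E) :
    ‖f' x - f' y‖ ^ 2 ≤ K * ⟪f' x - f' y, x - y⟫ := by
  have hpos (ε : ℝ) (hε : 0 < ε) : ‖f' x - f' y‖ ^ 2 ≤ (K + ε) * ⟪f' x - f' y, x - y⟫ := by
    have hKε : 0 < K + ε := by linarith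
    have hub' (a b : E) : f b ≤ f a + ⟪f' a, b - a⟫ + (K + ε) / 2 * ‖b - a‖ ^ 2 :=
      (hub a b).trans (by gcongr; linarith)
    have hxy := hconv.add_inner_gradient_add_sq_le hf hKε hub' x y
    have hyx := hconv.add_inner_gradient_add_sq_le hf hKε hub' y x
    rw [norm_sub_rev, ← neg_sub x y, inner_neg_right] at hxy
    have hsum : 1 / (K + ε) * ‖f' x - f' y‖ ^ 2 ≤ ⟪f' x - f' y, x - y⟫ := by
      have hhalf : 1 / (K + ε) = 2 * (1 / (2 * (K + ε))) := by field_simp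
      rw [inner_sub_left, hhalf]
      linarith
    rwa [div_mul_eq_mul_div, one_mul, div_le_iff₀' hKε] at hsum
  -- `K` itself may vanish: pass to the limit `ε → 0⁺`
  have hlim : Tendsto (fun ε => (K + ε) * ⟪f' x - f' y, x - y⟫) (𝓝[>] 0)
      (𝓝 (K * ⟪f' x - f' y, x - y⟫)) := by
    refine (Continuous.tendsto' ?_ 0 _ (by simp)).mono_left nhdsWithin_le_nhds
    fun_prop
  exact ge_of_tendsto hlim (eventually_nhdsWithin_of_forall hpos)

lemma HasGradientAt.sub_mul_norm_sq {g x : E} (hf : HasGradientAt f g x) (c : ℝ) :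
    HasGradientAt (fun z => f z - c / 2 * ‖z‖ ^ 2) (g - c • x) x := by
  rw [hasGradientAt_iff_hasFDerivAt] at hf ⊢
  refine (hf.sub (((hasFDerivAt_id x).norm_sq).const_mul (c / 2))).congr_fderiv ?_
  ext z
  simp only [sub_apply, smul_apply, InnerProductSpace.toDual_apply_apply, map_sub, map_smul,
    ContinuousLinearMap.comp_id, coe_innerSL_apply, id_eq, nsmul_eq_mul, smul_eq_mul]
  ring

lemma inner_gradient_sub_smul_nonneg {μ L : ℝ} (hμL : μ ≤ L) (hf : ∀ z, HasGradientAt f (f' z) z)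
    (hsc : ConvexOn ℝ univ (fun z => f z - μ / 2 * ‖z‖ ^ 2))
    (hlip : ∀ x y, ‖f' x - f' y‖ ≤ L * ‖x - y‖) (x y : E) :
    0 ≤ ⟪(f' x - f' y) - μ • (x - y), L • (x - y) - (f' x - f' y)⟫ := by
  have hh (z : E) := (hf z).sub_mul_norm_sq μ
  have hub (a b : E) : f b - μ / 2 * ‖b‖ ^ 2 ≤ f a - μ / 2 * ‖a‖ ^ 2
      + ⟪f' a - μ • a, b - a⟫ + (L - μ) / 2 * ‖b - a‖ ^ 2 := by
    have hdescent := le_add_inner_gradient_add_sq_of_lipschitz hf (fun z => hlip z a) b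
    have hexpand : ‖b‖ ^ 2 = ‖a‖ ^ 2 + 2 * ⟪a, b - a⟫ + ‖b - a‖ ^ 2 := by
      simpa using norm_add_sq_real a (b - a)
    rw [inner_sub_left, real_inner_smul_left, hexpand]
    linarith
  have hcoco := hsc.sq_norm_gradient_sub_le_mul_inner hh (sub_nonneg.mpr hμL) hub x y
  have hrw : (f' x - μ • x) - (f' y - μ • y) = (f' x - f' y) - μ • (x - y) := by module
  have hsplit : L • (x - y) - (f' x - f' y)
      = (L - μ) • (x - y) - ((f' x - f' y) - μ • (x - y)) := by module
  rw [hrw] at hcoco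
  rw [hsplit, inner_sub_right, real_inner_smul_right, real_inner_self_eq_norm_sq]
  linarith

end InnerProductSpace

theorem pgm_norm_monotone_general
    {E : Type*} [NormedAddCommGroup E] [InnerProductSpace ℝ E] [FiniteDimensional ℝ E]
    (f : E → ℝ) (f' : E → E) (μ L : ℝ) (hμL : μ ≤ L)
    (hdiff : ∀ x, HasGradientAt f (f' x) x)
    (hsc : ConvexOn ℝ Set.univ (fun z => f z - μ / 2 * ‖z‖ ^ 2))
    (hlip : ∀ x y, ‖f' x - f' y‖ ≤ L * ‖x - y‖)
    (t : ℝ) (ht : 0 < t)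
    (x xplus s : E)
    (hstep : xplus = x - t • (f' x + s)) :
    ‖f' xplus + s‖ ≤ max |1 - L * t| |1 - μ * t| * ((1 / t) * ‖x - xplus‖) := by
  have hx : x - xplus = t • (f' x + s) := by rw [hstep]; abel
  have hgap : t • (f' xplus + s) = (x - xplus) - t • (f' x - f' xplus) := by rw [hx]; module
  have hcontract := norm_sub_smul_le_max_mul_norm
    (inner_gradient_sub_smul_nonneg hμL hdiff hsc hlip x xplus) t
  rw [← hgap, norm_smul, Real.norm_of_nonneg ht.le] at hcontract
  rw [mul_left_comm, one_div, le_inv_mul_iff₀ ht]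
  exact hcontract

/-- **Norm monotonicity of the proximal gradient step.** If `x⁺ = prox_{tg}(x - t∇f x)`
and `s⁺ ∈ ∂g(x⁺)` satisfies `x⁺ = x - t(∇f x + s⁺)`, then
`‖∇f(x⁺) + s⁺‖ ≤ ρ(t)·(1/t)·‖x - x⁺‖` with `ρ(t) = max {|1 - Lt|, |1 - μt|}`. -/
theorem pgm_norm_monotone
    {E : Type*} [NormedAddCommGroup E] [InnerProductSpace ℝ E] [FiniteDimensional ℝ E]
    (f : E → ℝ) (f' : E → E) (g : E → ℝ) (μ L : ℝ) (hμ : 0 ≤ μ) (hμL : μ ≤ L) (hL : 0 < L)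
    (hdiff : ∀ x, HasGradientAt f (f' x) x)
    (hsc : ConvexOn ℝ Set.univ (fun z => f z - μ / 2 * ‖z‖ ^ 2))
    (hlip : ∀ x y, ‖f' x - f' y‖ ≤ L * ‖x - y‖)
    (hg : ConvexOn ℝ Set.univ g)
    (t : ℝ) (ht : 0 < t) (prox : E → E)
    (hprox : ∀ y : E, IsMinOn (fun z => g z + (1 / (2 * t)) * ‖z - y‖ ^ 2) Set.univ (prox y))
    (x xplus s : E)
    (hxplus : xplus = prox (x - t • f' x))
    (hs : ∀ u, g xplus + ⟪s, u - xplus⟫ ≤ g u)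
    (hstep : xplus = x - t • (f' x + s)) :
    ‖f' xplus + s‖ ≤ max |1 - L * t| |1 - μ * t| * ((1 / t) * ‖x - xplus‖) :=
  pgm_norm_monotone_general f f' μ L hμL hdiff hsc hlip t ht x xplus s hstep
end

section
/- (Norm monotonicity, convex case) Let f be convex and L-smooth, g proper closed convex, φ = f + g, and 0 < t ≤ 2/L. With x⁺ := prox_{tg}(x − t∇f(x)) and G(x,t) := (1/t)(x − x⁺), we have ‖G(x⁺,t)‖ ≤ d(0, ∂φ(x⁺)) ≤ ‖G(x,t)‖ ≤ d(0, ∂φ(x)). -/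
/-!
Write `G z = (z - z⁺) / t` for the gradient mapping. The optimality condition of the prox step
puts `G z - ∇f z` in `∂g z⁺`, and for `s ∈ ∂φ z` the vector `s - ∇f z` lies in `∂g z`; monotonicity
of `∂g` then gives `‖G z‖² ≤ ⟪s, G z⟫`, hence `‖G z‖ ≤ ‖s‖`. This is the first and the last
inequality (a subgradient exists because a finite convex function on a finite-dimensional space is
continuous, so Hahn–Banach separates its strict epigraph from `(z, φ z)`).
For the middle one, `G x - (∇f x - ∇f x⁺)` is a subgradient of `φ` at `x⁺`, and Baillon–Haddad
cocoercivity `‖Δ‖² ≤ L ⟪Δ, x - x⁺⟫` together with `t L ≤ 2` shows it is no longer than `G x`.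
-/

open scoped RealInnerProductSpace

/-- The convex subdifferential of `φ` at `z`. -/
def subdiff {E : Type*} [NormedAddCommGroup E] [InnerProductSpace ℝ E]
    (φ : E → ℝ) (z : E) : Set E :=
  {v | ∀ u, φ z + ⟪v, u - z⟫ ≤ φ u}

open Set

lemma IsMinOn.nonneg_of_hasDerivWithinAt_Icc {χ : ℝ → ℝ} {χ' a b : ℝ} (hab : a < b)
    (hmin : IsMinOn χ (Icc a b) a) (hχ : HasDerivWithinAt χ χ' (Icc a b) a) : 0 ≤ χ' := by
  have hcone : b - a ∈ posTangentConeAt (Icc a b) a :=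
    sub_mem_posTangentConeAt_of_segment_subset (segment_eq_Icc hab.le).subset
  exact (mul_nonneg_iff_of_pos_left (sub_pos.2 hab)).1
    (by simpa using hmin.localize.hasFDerivWithinAt_nonneg hχ.hasFDerivWithinAt hcone)

section InnerProductSpace

variable {E : Type*} [NormedAddCommGroup E] [InnerProductSpace ℝ E]

lemma norm_le_of_sq_norm_le_inner {u v : E} (h : ‖u‖ ^ 2 ≤ ⟪v, u⟫) : ‖u‖ ≤ ‖v‖ := by
  nlinarith [real_inner_le_norm v u, norm_nonneg u, norm_nonneg v]

lemma norm_sub_le_of_sq_norm_le_two_inner {u v : E} (h : ‖v‖ ^ 2 ≤ 2 * ⟪u, v⟫) :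
    ‖u - v‖ ≤ ‖u‖ := by
  have : ‖u - v‖ ^ 2 ≤ ‖u‖ ^ 2 := by rw [norm_sub_sq_real]; linarith
  exact (pow_le_pow_iff_left₀ (norm_nonneg _) (norm_nonneg _) two_ne_zero).1 this

lemma add_mem_subdiff_add {f g : E → ℝ} {u v z : E} (hu : u ∈ subdiff f z)
    (hv : v ∈ subdiff g z) : u + v ∈ subdiff (fun w => f w + g w) z := fun w => by
  have := add_le_add (hu w) (hv w)
  rw [inner_add_left]
  linarith

lemma inner_sub_nonneg_of_mem_subdiff {g : E → ℝ} {u v p z : E} (hu : u ∈ subdiff g p)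
    (hv : v ∈ subdiff g z) : 0 ≤ ⟪u - v, p - z⟫ := by
  have h₁ := hu z
  have h₂ := hv p
  rw [inner_sub_left, ← neg_sub p z, inner_neg_right] at *
  linarith

end InnerProductSpace

section CompleteSpace

variable {E : Type*} [NormedAddCommGroup E] [InnerProductSpace ℝ E] [CompleteSpace E]

lemma ConvexOn.neg_mem_subdiff_of_isMinOn_add {g F : E → ℝ} {F' z : E}
    (hg : ConvexOn ℝ univ g) (hF : HasGradientAt F F' z)
    (hmin : IsMinOn (fun u => g u + F u) univ z) : -F' ∈ subdiff g z := by
  intro w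
  set d := w - z
  -- along `[z, w]`, bounding `g` by its chord leaves a differentiable function minimal at `0`
  let χ : ℝ → ℝ := fun r => F (z + r • d) + r * (g w - g z)
  have hχmin : IsMinOn χ (Icc 0 1) 0 := by
    intro r ⟨hr₀, hr₁⟩
    have hseg : z + r • d = (1 - r) • z + r • w := by module
    have hgr := hg.2 (mem_univ z) (mem_univ w) (sub_nonneg.2 hr₁) hr₀ (by ring)
    have hmin_r : g z + F z ≤ g (z + r • d) + F (z + r • d) := hmin (mem_univ _)
    show F (z + (0 : ℝ) • d) + 0 * (g w - g z) ≤ F (z + r • d) + r * (g w - g z)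
    rw [hseg] at hmin_r ⊢
    simp only [smul_eq_mul] at hgr
    simp only [zero_smul, add_zero, zero_mul]
    linarith
  have hline : HasDerivAt (fun r : ℝ => z + r • d) d 0 := by
    simpa using ((hasDerivAt_id (0 : ℝ)).smul_const d).const_add z
  have hχ : HasDerivAt χ (⟪F', d⟫ + (g w - g z)) 0 := by
    have hFz : HasFDerivAt F (InnerProductSpace.toDual ℝ E F') (z + (0 : ℝ) • d) := by
      simpa using hF.hasFDerivAt
    exact ((hFz.comp_hasDerivAt 0 hline).add ((hasDerivAt_id 0).mul_const (g w - g z))).congr_deriv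
      (by simp [InnerProductSpace.toDual_apply_apply])
  have := hχmin.nonneg_of_hasDerivWithinAt_Icc one_pos hχ.hasDerivWithinAt
  rw [inner_neg_left]
  linarith

lemma ConvexOn.mem_subdiff_of_hasGradientAt {f : E → ℝ} {f' z : E}
    (hf : ConvexOn ℝ univ f) (hf' : HasGradientAt f f' z) : f' ∈ subdiff f z := by
  -- `f + (-f)` is constant, so every point minimizes it
  have hneg : HasGradientAt (fun u => -f u) (-f') z :=
    hasGradientAt_iff_hasFDerivAt.2 (by rw [map_neg]; exact hf'.hasFDerivAt.neg)
  simpa using hf.neg_mem_subdiff_of_isMinOn_add hneg (fun u _ => by simp)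

lemma ConvexOn.sub_mem_subdiff_of_mem_subdiff_add {f g : E → ℝ} {f' s z : E}
    (hf : HasGradientAt f f' z) (hg : ConvexOn ℝ univ g)
    (hs : s ∈ subdiff (fun u => f u + g u) z) : s - f' ∈ subdiff g z := by
  have hF : HasGradientAt (fun u => f u - ⟪s, u⟫) (f' - s) z :=
    hasGradientAt_iff_hasFDerivAt.2 (by
      rw [map_sub]; exact hf.hasFDerivAt.sub (InnerProductSpace.toDual ℝ E s).hasFDerivAt)
  have hmin : IsMinOn (fun u => g u + (f u - ⟪s, u⟫)) univ z := fun u _ => by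
    have := hs u
    rw [inner_sub_right] at this
    show g z + (f z - ⟪s, z⟫) ≤ g u + (f u - ⟪s, u⟫)
    linarith
  simpa using hg.neg_mem_subdiff_of_isMinOn_add hF hmin

/-- Optimality condition of the proximal gradient step `p = prox_{tg}(z - t v)`. -/
lemma ConvexOn.smul_sub_sub_mem_subdiff_of_isMinOn {g : E → ℝ} {t : ℝ} {v z p : E}
    (hg : ConvexOn ℝ univ g) (ht : 0 < t)
    (hp : IsMinOn (fun u => g u + (1 / (2 * t)) * ‖u - (z - t • v)‖ ^ 2) univ p) :
    (1 / t) • (z - p) - v ∈ subdiff g p := by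
  have hq : HasGradientAt (fun u => (1 / (2 * t)) * ‖u - (z - t • v)‖ ^ 2)
      ((1 / t) • (p - (z - t • v))) p := by
    rw [hasGradientAt_iff_hasFDerivAt]
    refine ((((hasFDerivAt_id p).sub_const (z - t • v)).norm_sq).const_mul
      (1 / (2 * t))).congr_fderiv ?_
    ext u
    simp only [one_div, mul_inv_rev, id_eq, map_sub, map_smul, ContinuousLinearMap.comp_id,
      smul_apply, sub_apply, coe_innerSL_apply, smul_eq_mul,
      nsmul_eq_mul, Nat.cast_ofNat, InnerProductSpace.toDual_apply_apply]
    field_simp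
  convert hg.neg_mem_subdiff_of_isMinOn_add hq hp using 1
  simp only [smul_sub, smul_smul, one_div_mul_cancel ht.ne', one_smul]
  abel

lemma descent_lemma {f : E → ℝ} {f' : E → E} {L : ℝ} (hf : ∀ x, HasGradientAt f (f' x) x)
    (hlip : ∀ x y, ‖f' x - f' y‖ ≤ L * ‖x - y‖) (x d : E) :
    f (x + d) ≤ f x + ⟪f' x, d⟫ + L / 2 * ‖d‖ ^ 2 := by
  let φ : ℝ → ℝ := fun s => f (x + s • d) - s * ⟪f' x, d⟫
  have hφ : ∀ s, HasDerivAt φ (⟪f' (x + s • d), d⟫ - ⟪f' x, d⟫) s := fun s => by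
    have hline : HasDerivAt (fun r : ℝ => x + r • d) d s := by
      simpa using ((hasDerivAt_id s).smul_const d).const_add x
    exact (((hf _).hasFDerivAt.comp_hasDerivAt s hline).sub
      ((hasDerivAt_id s).mul_const _)).congr_deriv (by simp [InnerProductSpace.toDual_apply_apply])
  let B : ℝ → ℝ := fun s => f x + L / 2 * s ^ 2 * ‖d‖ ^ 2
  have hB : ∀ s, HasDerivAt B (L * s * ‖d‖ ^ 2) s := fun s =>
    (((hasDerivAt_pow 2 s).const_mul (L / 2)).mul_const _).const_add _ |>.congr_deriv (by ring)
  have hbound : ∀ s ∈ Ico (0 : ℝ) 1, ⟪f' (x + s • d), d⟫ - ⟪f' x, d⟫ ≤ L * s * ‖d‖ ^ 2 := by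
    intro s ⟨hs, _⟩
    calc ⟪f' (x + s • d), d⟫ - ⟪f' x, d⟫ = ⟪f' (x + s • d) - f' x, d⟫ := (inner_sub_left ..).symm
      _ ≤ ‖f' (x + s • d) - f' x‖ * ‖d‖ := real_inner_le_norm _ _
      _ ≤ L * ‖s • d‖ * ‖d‖ := by
        gcongr
        simpa using hlip (x + s • d) x
      _ = L * s * ‖d‖ ^ 2 := by rw [norm_smul, Real.norm_of_nonneg hs]; ring
  have := image_le_of_deriv_right_le_deriv_boundary
    (fun s _ => (hφ s).continuousAt.continuousWithinAt) (fun s _ => (hφ s).hasDerivWithinAt)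
    (by simp [φ, B]) (fun s _ => (hB s).continuousAt.continuousWithinAt)
    (fun s _ => (hB s).hasDerivWithinAt) hbound (right_mem_Icc.2 zero_le_one)
  simp only [φ, B, one_smul, one_mul, one_pow, mul_one] at this
  linarith

lemma ConvexOn.subdiff_nonempty {φ : E → ℝ} (hconv : ConvexOn ℝ univ φ) (hcont : Continuous φ)
    (x : E) : (subdiff φ x).Nonempty := by
  let S : Set (E × ℝ) := {p | φ p.1 < p.2}
  have hS : Convex ℝ S := by simpa using hconv.convex_strict_epigraph
  have hSo : IsOpen S := isOpen_lt (hcont.comp continuous_fst) continuous_snd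
  obtain ⟨l, hl⟩ := geometric_hahn_banach_open_point hS hSo (x := (x, φ x)) (lt_irrefl (φ x))
  set c := l (0, 1)
  have hdec : ∀ w r, l (w, r) = l (w, 0) + r * c := fun w r => by
    rw [← smul_eq_mul, ← map_smul, ← map_add, Prod.smul_mk, smul_zero, smul_eq_mul, mul_one,
      Prod.mk_add_mk, add_zero, zero_add]
  have hc : c < 0 := by
    have := hl (x, φ x + 1) (by simp [S])
    rw [hdec, hdec x (φ x)] at this
    linarith
  refine ⟨(InnerProductSpace.toDual ℝ E).symm ((-c⁻¹) • l.comp (.inl ℝ E ℝ)), fun z => ?_⟩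
  rw [InnerProductSpace.toDual_symm_apply]
  refine le_of_forall_gt_imp_ge_of_dense fun r hr => ?_
  have hlt := hl (z, r) hr
  rw [hdec, hdec x (φ x)] at hlt
  simp only [smul_apply, ContinuousLinearMap.comp_apply,
    ContinuousLinearMap.inl_apply, smul_eq_mul]
  have hk : 0 < -c⁻¹ := neg_pos.2 (inv_lt_zero.2 hc)
  have := mul_lt_mul_of_pos_left (show l (z - x, 0) < (φ x - r) * c by
    rw [← sub_zero (0 : ℝ), ← Prod.mk_sub_mk, map_sub]; linarith) hk
  have hcancel : -c⁻¹ * ((φ x - r) * c) = r - φ x := by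
    rw [mul_comm (φ x - r), ← mul_assoc, neg_mul, inv_mul_cancel₀ hc.ne]; ring
  linarith

lemma ConvexOn.add_inner_add_sq_norm_sub_le {f : E → ℝ} {f' : E → E} {L : ℝ} (hL : 0 < L)
    (hf : ∀ x, HasGradientAt f (f' x) x) (hconv : ConvexOn ℝ univ f)
    (hlip : ∀ x y, ‖f' x - f' y‖ ≤ L * ‖x - y‖) (a b : E) :
    f a + ⟪f' a, b - a⟫ + 1 / (2 * L) * ‖f' b - f' a‖ ^ 2 ≤ f b := by
  set Δ := f' b - f' a
  -- compare `f` at `b - Δ / L`, bounded above by the descent lemma at `b`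
  -- and below by the gradient inequality at `a`
  have hup := descent_lemma hf hlip b (-(1 / L) • Δ)
  have hlow := hconv.mem_subdiff_of_hasGradientAt (hf a) (b + -(1 / L) • Δ)
  have hΔ : 1 / L * ⟪f' b, Δ⟫ - 1 / L * ⟪f' a, Δ⟫ = 1 / L * ‖Δ‖ ^ 2 := by
    rw [← mul_sub, ← inner_sub_left, real_inner_self_eq_norm_sq]
  rw [show b + -(1 / L) • Δ - a = (b - a) + -(1 / L) • Δ by abel, inner_add_right] at hlow
  simp only [inner_smul_right, norm_smul, norm_neg, mul_pow,
    Real.norm_of_nonneg (by positivity : 0 ≤ 1 / L)] at hup hlow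
  have : 1 / (2 * L) * ‖Δ‖ ^ 2 = 1 / L * ‖Δ‖ ^ 2 - L / 2 * ((1 / L) ^ 2 * ‖Δ‖ ^ 2) := by
    field_simp; ring
  linarith

/-- Baillon–Haddad cocoercivity of the gradient. -/
lemma ConvexOn.inv_mul_sq_norm_sub_le_inner {f : E → ℝ} {f' : E → E} {L : ℝ} (hL : 0 < L)
    (hf : ∀ x, HasGradientAt f (f' x) x) (hconv : ConvexOn ℝ univ f)
    (hlip : ∀ x y, ‖f' x - f' y‖ ≤ L * ‖x - y‖) (a b : E) :
    1 / L * ‖f' a - f' b‖ ^ 2 ≤ ⟪f' a - f' b, a - b⟫ := by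
  have hab := hconv.add_inner_add_sq_norm_sub_le hL hf hlip a b
  have hba := hconv.add_inner_add_sq_norm_sub_le hL hf hlip b a
  rw [norm_sub_rev] at hab
  rw [inner_sub_left, ← neg_sub a b, inner_neg_right] at *
  have : 1 / L * ‖f' a - f' b‖ ^ 2 = 2 * (1 / (2 * L) * ‖f' a - f' b‖ ^ 2) := by field_simp
  linarith

lemma norm_smul_sub_le_of_mem_subdiff_add {f g : E → ℝ} {t : ℝ} {v z p s : E}
    (hf : HasGradientAt f v z) (hg : ConvexOn ℝ univ g) (ht : 0 < t)
    (hp : IsMinOn (fun u => g u + (1 / (2 * t)) * ‖u - (z - t • v)‖ ^ 2) univ p)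
    (hs : s ∈ subdiff (fun u => f u + g u) z) : ‖(1 / t) • (z - p)‖ ≤ ‖s‖ := by
  set G := (1 / t) • (z - p)
  have hmono := inner_sub_nonneg_of_mem_subdiff (hg.smul_sub_sub_mem_subdiff_of_isMinOn ht hp)
    (hg.sub_mem_subdiff_of_mem_subdiff_add hf hs)
  have hpz : p - z = -t • G := by simp [G, smul_smul, ht.ne']
  rw [sub_sub_sub_cancel_right, hpz, real_inner_smul_right, inner_sub_left,
    real_inner_self_eq_norm_sq] at hmono
  apply norm_le_of_sq_norm_le_inner
  nlinarith

lemma infDist_subdiff_le_norm_smul_sub {f g : E → ℝ} {f' : E → E} {t L : ℝ} {x xplus : E}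
    (hL : 0 < L) (hf : ∀ y, HasGradientAt f (f' y) y) (hconv : ConvexOn ℝ univ f)
    (hlip : ∀ y z, ‖f' y - f' z‖ ≤ L * ‖y - z‖) (hg : ConvexOn ℝ univ g) (ht : 0 < t)
    (htL : t ≤ 2 / L)
    (hp : IsMinOn (fun u => g u + (1 / (2 * t)) * ‖u - (x - t • f' x)‖ ^ 2) univ xplus) :
    Metric.infDist 0 (subdiff (fun u => f u + g u) xplus) ≤ ‖(1 / t) • (x - xplus)‖ := by
  set G := (1 / t) • (x - xplus)
  set Δ := f' x - f' xplus
  have hmem : G - Δ ∈ subdiff (fun u => f u + g u) xplus := by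
    convert add_mem_subdiff_add (hconv.mem_subdiff_of_hasGradientAt (hf xplus))
      (hg.smul_sub_sub_mem_subdiff_of_isMinOn ht hp) using 1
    simp only [G, Δ]
    abel
  have hcoco := hconv.inv_mul_sq_norm_sub_le_inner hL hf hlip x xplus
  have hxG : x - xplus = t • G := by simp [G, smul_smul, ht.ne']
  rw [hxG, real_inner_smul_right, real_inner_comm] at hcoco
  have htL' : t * L ≤ 2 := (le_div_iff₀ hL).1 htL
  have hinner : 0 ≤ ⟪G, Δ⟫ := by
    have : 0 ≤ 1 / L * ‖Δ‖ ^ 2 := by positivity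
    exact nonneg_of_mul_nonneg_right (this.trans hcoco) ht
  have hsq : ‖Δ‖ ^ 2 ≤ 2 * ⟪G, Δ⟫ := by
    have := mul_le_mul_of_nonneg_left hcoco hL.le
    rw [← mul_assoc, mul_one_div_cancel hL.ne', one_mul] at this
    nlinarith
  calc Metric.infDist 0 (subdiff (fun u => f u + g u) xplus) ≤ dist 0 (G - Δ) :=
        Metric.infDist_le_dist_of_mem hmem
    _ = ‖G - Δ‖ := dist_zero_left _
    _ ≤ ‖G‖ := norm_sub_le_of_sq_norm_le_two_inner hsq

end CompleteSpace

/-- **Norm monotonicity, convex case.** For `f` convex `L`-smooth, `g` convex,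
`φ = f + g`, `0 < t ≤ 2/L` and `x⁺ = prox_{tg}(x - t∇f x)`:
`‖G(x⁺,t)‖ ≤ d(0, ∂φ(x⁺)) ≤ ‖G(x,t)‖ ≤ d(0, ∂φ(x))`. -/
theorem pgm_norm_monotone_convex
    {E : Type*} [NormedAddCommGroup E] [InnerProductSpace ℝ E] [FiniteDimensional ℝ E]
    (f : E → ℝ) (f' : E → E) (g : E → ℝ) (L : ℝ) (hL : 0 < L)
    (hdiff : ∀ x, HasGradientAt f (f' x) x)
    (hconv : ConvexOn ℝ Set.univ f)
    (hlip : ∀ x y, ‖f' x - f' y‖ ≤ L * ‖x - y‖)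
    (hg : ConvexOn ℝ Set.univ g)
    (t : ℝ) (ht : 0 < t) (htL : t ≤ 2 / L) (prox : E → E)
    (hprox : ∀ y : E, IsMinOn (fun z => g z + (1 / (2 * t)) * ‖z - y‖ ^ 2) Set.univ (prox y))
    (x xplus : E) (hxplus : xplus = prox (x - t • f' x)) :
    ‖(1 / t) • (xplus - prox (xplus - t • f' xplus))‖
        ≤ Metric.infDist 0 (subdiff (fun z => f z + g z) xplus) ∧
      Metric.infDist 0 (subdiff (fun z => f z + g z) xplus) ≤ ‖(1 / t) • (x - xplus)‖ ∧
      ‖(1 / t) • (x - xplus)‖ ≤ Metric.infDist 0 (subdiff (fun z => f z + g z) x) := by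
  have : CompleteSpace E := FiniteDimensional.complete ℝ E
  have hcont : Continuous fun z => f z + g z :=
    (continuous_iff_continuousAt.2 fun z => (hdiff z).continuousAt).add
      (continuousOn_univ.1 (hg.continuousOn isOpen_univ))
  have hgradMap : ∀ z, ‖(1 / t) • (z - prox (z - t • f' z))‖
      ≤ Metric.infDist 0 (subdiff (fun z => f z + g z) z) := fun z =>
    (Metric.le_infDist ((hconv.add hg).subdiff_nonempty hcont z)).2 fun s hs => by
      simpa using norm_smul_sub_le_of_mem_subdiff_add (hdiff z) hg ht (hprox _) hs
  refine ⟨hgradMap xplus, ?_, hxplus ▸ hgradMap x⟩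
  exact infDist_subdiff_le_norm_smul_sub hL hdiff hconv hlip hg ht htL (hxplus ▸ hprox _)
end

section
/- (Refined descent, convex case) Let f be convex and L-smooth, g proper closed convex, φ = f + g, and 0 < t ≤ 1/L. With x⁺ := prox_{tg}(x − t∇f(x)) and G(·,t) the proximal gradient mapping, φ(x) ≥ φ(x⁺) + (t/2)‖G(x,t)‖² + (t/2)‖G(x⁺,t)‖². -/
/-!
Add two first-order estimates. The prox step satisfies the variational inequality
`g x⁺ + ⟪(x - t∇f x) - x⁺, x - x⁺⟫ / t ≤ g x`, and a convex `L`-smooth `f` satisfies the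
cocoercivity bound `f x⁺ + ⟪∇f x⁺, x - x⁺⟫ + ‖∇f x - ∇f x⁺‖² / (2L) ≤ f x`. Writing
`a = x - x⁺`, `d = ∇f x - ∇f x⁺` and using `t ≤ 1/L`, their sum gives
`φ x ≥ φ x⁺ + ‖a‖² / (2t) + ‖a - t d‖² / (2t)`. Finally `a - t d` is the difference of the two
points to which the prox is applied, so nonexpansiveness of the prox bounds `‖x⁺ - x⁺⁺‖` by
`‖a - t d‖`.
-/

open scoped RealInnerProductSpace
open Set Filter Topology AffineMap

section ProxGradient

variable {E : Type*} [NormedAddCommGroup E] [InnerProductSpace ℝ E]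

section Smooth

variable [CompleteSpace E] {f : E → ℝ}

theorem HasGradientAt.hasDerivAt_comp_lineMap {x y v : E} {s : ℝ}
    (h : HasGradientAt f v (lineMap x y s)) :
    HasDerivAt (fun s => f (lineMap x y s)) ⟪v, y - x⟫ s :=
  h.hasFDerivAt.comp_hasDerivAt s hasDerivAt_lineMap

theorem ConvexOn.add_inner_le_of_hasGradientAt (hf : ConvexOn ℝ univ f) {x v : E}
    (h : HasGradientAt f v x) (y : E) : f x + ⟪v, y - x⟫ ≤ f y := by
  have hline : ConvexOn ℝ univ (fun s : ℝ => f (lineMap x y s)) :=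
    hf.comp_affineMap (lineMap x y)
  have hderiv := (lineMap_apply_zero (k := ℝ) x y ▸ h).hasDerivAt_comp_lineMap
  have := hline.le_slope_of_hasDerivAt (mem_univ 0) (mem_univ 1) zero_lt_one hderiv
  simp only [slope_def_field, lineMap_apply_zero, lineMap_apply_one, sub_zero, div_one] at this
  linarith

theorem le_add_inner_add_sq_norm_of_lipschitz_gradient {f' : E → E} {L : ℝ}
    (hdiff : ∀ x, HasGradientAt f (f' x) x) (hlip : ∀ x y, ‖f' x - f' y‖ ≤ L * ‖x - y‖)
    (x y : E) : f y ≤ f x + ⟪f' x, y - x⟫ + L / 2 * ‖y - x‖ ^ 2 := by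
  set ψ : ℝ → ℝ := fun s => f (lineMap x y s) - s * ⟪f' x, y - x⟫ - L / 2 * s ^ 2 * ‖y - x‖ ^ 2
  have hψ : ∀ s, HasDerivAt ψ
      (⟪f' (lineMap x y s), y - x⟫ - ⟪f' x, y - x⟫ - L * s * ‖y - x‖ ^ 2) s := by
    intro s
    have h1 := (hdiff (lineMap x y s)).hasDerivAt_comp_lineMap
    have h2 := (hasDerivAt_id s).mul_const ⟪f' x, y - x⟫
    have h3 := ((hasDerivAt_pow 2 s).const_mul (L / 2)).mul_const (‖y - x‖ ^ 2)
    refine ((h1.sub h2).sub h3).congr_deriv ?_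
    push_cast
    ring
  have hψ_nonpos : ∀ s ∈ interior (Ici (0 : ℝ)),
      ⟪f' (lineMap x y s), y - x⟫ - ⟪f' x, y - x⟫ - L * s * ‖y - x‖ ^ 2 ≤ 0 := by
    intro s hs
    rw [interior_Ici] at hs
    rw [sub_nonpos]
    have hdist : ‖lineMap x y s - x‖ = s * ‖y - x‖ := by
      rw [← vsub_eq_sub, lineMap_vsub_left, vsub_eq_sub, norm_smul, Real.norm_of_nonneg hs.le]
    calc ⟪f' (lineMap x y s), y - x⟫ - ⟪f' x, y - x⟫
        = ⟪f' (lineMap x y s) - f' x, y - x⟫ := (inner_sub_left _ _ _).symm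
      _ ≤ ‖f' (lineMap x y s) - f' x‖ * ‖y - x‖ := real_inner_le_norm _ _
      _ ≤ L * ‖lineMap x y s - x‖ * ‖y - x‖ := by gcongr; exact hlip _ _
      _ = L * s * ‖y - x‖ ^ 2 := by rw [hdist]; ring
  have hanti : AntitoneOn ψ (Ici 0) :=
    antitoneOn_of_hasDerivWithinAt_nonpos (convex_Ici 0)
      (fun s _ => (hψ s).continuousAt.continuousWithinAt)
      (fun s _ => (hψ s).hasDerivWithinAt) hψ_nonpos
  have := hanti self_mem_Ici (by norm_num : (1 : ℝ) ∈ Ici 0) zero_le_one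
  simp only [ψ, lineMap_apply_zero, lineMap_apply_one] at this
  linarith

theorem ConvexOn.add_inner_add_sq_norm_sub_le_of_lipschitz_gradient {f' : E → E} {L : ℝ}
    (hf : ConvexOn ℝ univ f) (hL : 0 < L)
    (hdiff : ∀ x, HasGradientAt f (f' x) x) (hlip : ∀ x y, ‖f' x - f' y‖ ≤ L * ‖x - y‖)
    (x y : E) : f y + ⟪f' y, x - y⟫ + 1 / (2 * L) * ‖f' x - f' y‖ ^ 2 ≤ f x := by
  set d := f' x - f' y with hd_def
  -- bound `f` at `x - d / L` from below by convexity at `y` and from above by smoothness at `x`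
  set z := x - L⁻¹ • d with hz
  have hlow := hf.add_inner_le_of_hasGradientAt (hdiff y) z
  have hup := le_add_inner_add_sq_norm_of_lipschitz_gradient hdiff hlip x z
  have hzy : ⟪f' y, z - y⟫ = ⟪f' y, x - y⟫ - L⁻¹ * ⟪f' y, d⟫ := by
    rw [show z - y = (x - y) - L⁻¹ • d by rw [hz]; abel, inner_sub_right, real_inner_smul_right]
  have hzx : ⟪f' x, z - x⟫ = -(L⁻¹ * ⟪f' x, d⟫) := by
    rw [show z - x = -(L⁻¹ • d) by rw [hz]; abel, inner_neg_right, real_inner_smul_right]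
  have hzx_norm : L / 2 * ‖z - x‖ ^ 2 = 1 / (2 * L) * ‖d‖ ^ 2 := by
    rw [show z - x = -(L⁻¹ • d) by rw [hz]; abel, norm_neg, norm_smul,
      Real.norm_of_nonneg (inv_nonneg.mpr hL.le)]
    field_simp
  have hd : L⁻¹ * ⟪f' x, d⟫ - L⁻¹ * ⟪f' y, d⟫ = 2 * (1 / (2 * L) * ‖d‖ ^ 2) := by
    rw [← mul_sub, ← inner_sub_left, ← hd_def, real_inner_self_eq_norm_sq]
    field_simp
  linarith

end Smooth

def IsProx (g : E → ℝ) (t : ℝ) (y p : E) : Prop :=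
  IsMinOn (fun z => g z + 1 / (2 * t) * ‖z - y‖ ^ 2) univ p

namespace IsProx

variable {g : E → ℝ} {t : ℝ}

theorem add_inner_le (hg : ConvexOn ℝ univ g) {y p : E} (hp : IsProx g t y p) (z : E) :
    g p + 1 / t * ⟪y - p, z - p⟫ ≤ g z := by
  set A := g z - g p - 1 / t * ⟪y - p, z - p⟫ with hA
  set B := 1 / (2 * t) * ‖z - p‖ ^ 2 with hB
  -- compare `p` with `lineMap p z s`, divide by `s` and let `s → 0⁺`
  have hstep : ∀ s ∈ Ioo (0 : ℝ) 1, 0 ≤ A + s * B := by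
    rintro s ⟨hs0, hs1⟩
    have hmin := isMinOn_iff.mp hp (lineMap p z s) (mem_univ _)
    have hconv : g (lineMap p z s) ≤ (1 - s) * g p + s * g z := by
      simpa only [lineMap_apply_module, smul_eq_mul] using
        hg.2 (mem_univ p) (mem_univ z) (sub_nonneg.mpr hs1.le) hs0.le (by ring)
    have hsq : ‖lineMap p z s - y‖ ^ 2
        = ‖p - y‖ ^ 2 + 2 * (s * ⟪p - y, z - p⟫) + s ^ 2 * ‖z - p‖ ^ 2 := by
      rw [lineMap_apply_module', show s • (z - p) + p - y = (p - y) + s • (z - p) by abel,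
        norm_add_sq_real, real_inner_smul_right, norm_smul, Real.norm_of_nonneg hs0.le, mul_pow]
    have hyp : ⟪y - p, z - p⟫ = -⟪p - y, z - p⟫ := by
      rw [← inner_neg_left, neg_sub]
    have hs : 0 ≤ s * (A + s * B) := by
      rw [hsq] at hmin
      rw [hA, hB, hyp, show 1 / t = 2 * (1 / (2 * t)) by ring]
      linear_combination hmin + hconv
    exact (mul_nonneg_iff_of_pos_left hs0).mp hs
  have hcont : Continuous (fun s : ℝ => A + s * B) := by fun_prop
  have hlim : Tendsto (fun s : ℝ => A + s * B) (𝓝[>] 0) (𝓝 A) :=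
    (hcont.tendsto' 0 A (by simp only [zero_mul, add_zero])).mono_left nhdsWithin_le_nhds
  have hA_nonneg : 0 ≤ A := ge_of_tendsto hlim (mem_of_superset (Ioo_mem_nhdsGT one_pos) hstep)
  linarith

theorem sq_norm_sub_le_inner (hg : ConvexOn ℝ univ g) (ht : 0 < t) {u v p q : E}
    (hp : IsProx g t u p) (hq : IsProx g t v q) : ‖p - q‖ ^ 2 ≤ ⟪u - v, p - q⟫ := by
  have hpq := hp.add_inner_le hg q
  have hqp := hq.add_inner_le hg p
  have hsum : ⟪u - p, q - p⟫ + ⟪v - q, p - q⟫ = ‖p - q‖ ^ 2 - ⟪u - v, p - q⟫ := by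
    calc ⟪u - p, q - p⟫ + ⟪v - q, p - q⟫ = ⟪(v - q) - (u - p), p - q⟫ := by
          rw [inner_sub_left (v - q), ← neg_sub p q, inner_neg_right]
          ring
      _ = ⟪(p - q) - (u - v), p - q⟫ := by congr 1; abel
      _ = ‖p - q‖ ^ 2 - ⟪u - v, p - q⟫ := by rw [inner_sub_left, real_inner_self_eq_norm_sq]
  have : 1 / t * (‖p - q‖ ^ 2 - ⟪u - v, p - q⟫) ≤ 0 := by
    rw [← hsum, mul_add]
    linarith
  exact sub_nonpos.mp (nonpos_of_mul_nonpos_right this (one_div_pos.mpr ht))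

theorem norm_sub_le (hg : ConvexOn ℝ univ g) (ht : 0 < t) {u v p q : E}
    (hp : IsProx g t u p) (hq : IsProx g t v q) : ‖p - q‖ ≤ ‖u - v‖ := by
  have hfirm := sq_norm_sub_le_inner hg ht hp hq
  have hcs := real_inner_le_norm (u - v) (p - q)
  nlinarith [norm_nonneg (p - q), norm_nonneg (u - v)]

end IsProx

theorem add_sq_norm_div_sub_inner_add_le_of_isProx [CompleteSpace E] {f g : E → ℝ}
    {f' : E → E} {L t : ℝ} (hf : ConvexOn ℝ univ f) (hL : 0 < L)
    (hdiff : ∀ x, HasGradientAt f (f' x) x) (hlip : ∀ x y, ‖f' x - f' y‖ ≤ L * ‖x - y‖)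
    (hg : ConvexOn ℝ univ g) (ht : t ≠ 0) {x xplus : E}
    (hxplus : IsProx g t (x - t • f' x) xplus) :
    f xplus + g xplus + ‖x - xplus‖ ^ 2 / t - ⟪f' x - f' xplus, x - xplus⟫
      + 1 / (2 * L) * ‖f' x - f' xplus‖ ^ 2 ≤ f x + g x := by
  have hg_step : g xplus + (‖x - xplus‖ ^ 2 / t - ⟪f' x, x - xplus⟫) ≤ g x := by
    have h := hxplus.add_inner_le hg x
    rw [show x - t • f' x - xplus = (x - xplus) - t • f' x by abel, inner_sub_left,
      real_inner_smul_left, real_inner_self_eq_norm_sq] at h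
    convert h using 2
    field_simp
  have hf_step := hf.add_inner_add_sq_norm_sub_le_of_lipschitz_gradient hL hdiff hlip x xplus
  rw [inner_sub_left]
  linarith

end ProxGradient

/-- **Refined descent lemma (convex case).** With `x⁺ = prox_{tg}(x - t∇f x)` and
`G(z,t) = (1/t)(z - prox_{tg}(z - t∇f z))`, for `0 < t ≤ 1/L`:
`φ(x) ≥ φ(x⁺) + (t/2)‖G(x,t)‖² + (t/2)‖G(x⁺,t)‖²`. -/
theorem refined_descent_convex
    {E : Type*} [NormedAddCommGroup E] [InnerProductSpace ℝ E] [FiniteDimensional ℝ E]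
    (f : E → ℝ) (f' : E → E) (g : E → ℝ) (L : ℝ) (hL : 0 < L)
    (hdiff : ∀ x, HasGradientAt f (f' x) x)
    (hconv : ConvexOn ℝ Set.univ f)
    (hlip : ∀ x y, ‖f' x - f' y‖ ≤ L * ‖x - y‖)
    (hg : ConvexOn ℝ Set.univ g)
    (t : ℝ) (ht : 0 < t) (htL : t ≤ 1 / L) (prox : E → E)
    (hprox : ∀ y : E, IsMinOn (fun z => g z + (1 / (2 * t)) * ‖z - y‖ ^ 2) Set.univ (prox y))
    (x xplus : E) (hxplus : xplus = prox (x - t • f' x)) :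
    f x + g x ≥ f xplus + g xplus
      + (t / 2) * ‖(1 / t) • (x - xplus)‖ ^ 2
      + (t / 2) * ‖(1 / t) • (xplus - prox (xplus - t • f' xplus))‖ ^ 2 := by
  set r := xplus - prox (xplus - t • f' xplus)
  have hG : ∀ w : E, t / 2 * ‖(1 / t) • w‖ ^ 2 = ‖w‖ ^ 2 / (2 * t) := fun w => by
    rw [norm_smul, Real.norm_of_nonneg (one_div_pos.mpr ht).le]
    field_simp
  have hstep := add_sq_norm_div_sub_inner_add_le_of_isProx hconv hL hdiff hlip hg ht.ne'
    (hxplus ▸ hprox (x - t • f' x))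
  have hnonexp : ‖r‖ ≤ ‖(x - xplus) - t • (f' x - f' xplus)‖ := by
    have h := IsProx.norm_sub_le hg ht (hprox (x - t • f' x)) (hprox (xplus - t • f' xplus))
    rwa [← hxplus, show x - t • f' x - (xplus - t • f' xplus)
      = (x - xplus) - t • (f' x - f' xplus) by module] at h
  have htL' : t / 2 ≤ 1 / (2 * L) := by
    calc t / 2 ≤ 1 / L / 2 := by linarith
      _ = 1 / (2 * L) := by ring
  calc f xplus + g xplus + t / 2 * ‖(1 / t) • (x - xplus)‖ ^ 2 + t / 2 * ‖(1 / t) • r‖ ^ 2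
      = f xplus + g xplus + (‖x - xplus‖ ^ 2 + ‖r‖ ^ 2) / (2 * t) := by rw [hG, hG]; ring
    _ ≤ f xplus + g xplus
        + (‖x - xplus‖ ^ 2 + ‖(x - xplus) - t • (f' x - f' xplus)‖ ^ 2) / (2 * t) := by gcongr
    _ = f xplus + g xplus + ‖x - xplus‖ ^ 2 / t - ⟪f' x - f' xplus, x - xplus⟫
        + t / 2 * ‖f' x - f' xplus‖ ^ 2 := by
        rw [norm_sub_sq_real (x - xplus), real_inner_smul_right, norm_smul,
          Real.norm_of_nonneg ht.le, real_inner_comm]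
        field_simp
        ring
    _ ≤ f x + g x := by
        have := mul_le_mul_of_nonneg_right htL' (sq_nonneg ‖f' x - f' xplus‖)
        linarith
end
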